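/- arXiv:1610.04809 — 2 statements merged into one kernel-verified Lean document; each statement's English description precedes it below -/
import Mathlib

section
/- Let γ > 2 and 0 < θ < 1 with φ(x) = x^θ. Then (1/2)·((γ-2)/(γ-1)·φ'(Ȳx₀) + λ)·X̄ < (1/2)·(∫_{x₀}^∞ φ'(xȲ)·x^{1-γ}dx + λX̄), where X̄ = x₀^{2-γ}/(γ-2) and Ȳ, λ, x₀ > 0. In other words, the threshold on CP cost a below which no CPs are cut off is strictly smaller for revenue maximization than for social-welfare maximization. -/
open MeasureTheory Set

/-! Both sides share the term `lam * Xbar / 2`. The integral is an explicit power integral,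
`θ Ȳ^(θ-1) x₀^(θ+1-γ) / (γ-1-θ)`, while the rest of the left-hand side is
`θ Ȳ^(θ-1) x₀^(θ+1-γ) / (γ-1)`; so the inequality reduces to `γ - 1 - θ < γ - 1`, i.e. `0 < θ`. -/

theorem integral_Ioi_mul_rpow_mul_rpow {a c p q : ℝ} (ha : 0 < a) (hc : 0 ≤ c)
    (hpq : p + q < -1) :
    ∫ x in Ioi a, (x * c) ^ p * x ^ q = c ^ p * (a ^ (p + q + 1) / -(p + q + 1)) := by
  have hintegrand :
      EqOn (fun x => (x * c) ^ p * x ^ q) (fun x => c ^ p * x ^ (p + q)) (Ioi a) := by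
    intro x hx
    have hx0 : 0 < x := ha.trans hx
    simp only [Real.mul_rpow hx0.le hc, Real.rpow_add hx0]
    ring
  rw [setIntegral_congr_fun measurableSet_Ioi hintegrand, integral_const_mul,
    integral_Ioi_rpow_of_lt hpq ha, div_neg, neg_div]

theorem stmt_14_general (γ θ lam x₀ Ybar Xbar : ℝ)
    (hγ : 2 < γ) (hθ0 : 0 < θ) (hθ1 : θ < 1)
    (hx₀ : 0 < x₀) (hY : 0 < Ybar)
    (hX : Xbar = x₀ ^ (2 - γ) / (γ - 2)) :
    (1 / 2) * ((γ - 2) / (γ - 1) * (θ * (Ybar * x₀) ^ (θ - 1)) + lam) * Xbar <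
    (1 / 2) * ((∫ x in Ioi x₀, θ * (x * Ybar) ^ (θ - 1) * x ^ (1 - γ)) +
      lam * Xbar) := by
  have hintegral : ∫ x in Ioi x₀, θ * (x * Ybar) ^ (θ - 1) * x ^ (1 - γ)
      = θ * Ybar ^ (θ - 1) * x₀ ^ (θ + 1 - γ) / (γ - 1 - θ) := by
    simp_rw [mul_assoc θ]
    rw [integral_const_mul, integral_Ioi_mul_rpow_mul_rpow hx₀ hY.le (by linarith),
      show θ - 1 + (1 - γ) + 1 = θ + 1 - γ by ring, show -(θ + 1 - γ) = γ - 1 - θ by ring]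
    ring
  have hlhs : (γ - 2) / (γ - 1) * (θ * (Ybar * x₀) ^ (θ - 1)) * Xbar
      = θ * Ybar ^ (θ - 1) * x₀ ^ (θ + 1 - γ) / (γ - 1) := by
    have hpow : x₀ ^ (θ + 1 - γ) = x₀ ^ (θ - 1) * x₀ ^ (2 - γ) := by
      rw [← Real.rpow_add hx₀]; ring_nf
    rw [hX, Real.mul_rpow hY.le hx₀.le, hpow]
    field_simp [show γ - 2 ≠ 0 by linarith, show γ - 1 ≠ 0 by linarith]
  have hlt : θ * Ybar ^ (θ - 1) * x₀ ^ (θ + 1 - γ) / (γ - 1)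
      < θ * Ybar ^ (θ - 1) * x₀ ^ (θ + 1 - γ) / (γ - 1 - θ) :=
    div_lt_div_of_pos_left (by positivity) (by linarith) (by linarith)
  rw [hintegral]
  linarith

theorem stmt_14 (γ θ lam x₀ Ybar Xbar : ℝ)
    (hγ : 2 < γ) (hθ0 : 0 < θ) (hθ1 : θ < 1)
    (hlam : 0 < lam) (hx₀ : 0 < x₀) (hY : 0 < Ybar)
    (hX : Xbar = x₀ ^ (2 - γ) / (γ - 2)) :
    (1 / 2) * ((γ - 2) / (γ - 1) * (θ * (Ybar * x₀) ^ (θ - 1)) + lam) * Xbar <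
    (1 / 2) * ((∫ x in Ioi x₀, θ * (x * Ybar) ^ (θ - 1) * x ^ (1 - γ)) +
      lam * Xbar) :=
  stmt_14_general γ θ lam x₀ Ybar Xbar hγ hθ0 hθ1 hx₀ hY hX
end

section
/- Let γ > 2, φ nonnegative increasing differentiable concave on [0,∞) with x·φ'(x) ≤ φ(x), and constants A, B ≥ 0, λ > 0. Define η(x_t) = A·x_t/√(I(x_t)) with I(x_t) = x_t^{2-γ}/(γ-2), and R(x_t) = φ(η(x_t))·x_t^{1-γ}/(γ-1) + λ·B·√(I(x_t)). Then ∂η/∂x_t = (γ/2)·η(x_t)/x_t and R'(x_t) ≤ (γ/(2(γ-1)) − 1)·φ(η(x_t))·x_t^{-γ} ≤ 0. -/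
/-!
On `x > 0` one has `√(x ^ (2 - γ) / (γ - 2)) = x ^ ((2 - γ) / 2) / √(γ - 2)`, so `η` is a
constant multiple of `x ^ (γ / 2)`, which gives `η' = (γ / 2) η / x`. In `R'` the chain-rule
term is then `(γ / 2) η φ'(η) x ^ (-γ) / (γ - 1)`, which `x φ'(x) ≤ φ(x)` bounds by
`(γ / 2) φ(η) x ^ (-γ) / (γ - 1)`. The `√I` term is decreasing, so it only lowers `R'`.
-/

open Set Filter Topology

lemma sqrt_rpow_div {x : ℝ} (hx : 0 ≤ x) (p d : ℝ) :
    √(x ^ p / d) = x ^ (p / 2) / √d := by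
  rw [Real.sqrt_div (Real.rpow_nonneg hx _), Real.sqrt_eq_rpow, ← Real.rpow_mul hx]
  ring_nf

lemma mul_div_sqrt_rpow_div {x : ℝ} (hx : 0 < x) (a p d : ℝ) :
    a * x / √(x ^ p / d) = a * √d * x ^ (1 - p / 2) := by
  rw [sqrt_rpow_div hx.le, Real.rpow_sub hx, Real.rpow_one, div_div_eq_mul_div]
  ring

lemma hasDerivAt_sqrt_rpow_div {x : ℝ} (hx : 0 < x) (p d : ℝ) :
    HasDerivAt (fun y => √(y ^ p / d)) (p / 2 * x ^ (p / 2 - 1) / √d) x := by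
  have hEq : (fun y => y ^ (p / 2) / √d) =ᶠ[𝓝 x] fun y => √(y ^ p / d) :=
    eventually_of_mem (Ioi_mem_nhds hx) fun y hy => (sqrt_rpow_div (le_of_lt hy) p d).symm
  exact ((Real.hasDerivAt_rpow_const (Or.inl hx.ne')).div_const _).congr_of_eventuallyEq hEq.symm

lemma hasDerivAt_mul_div_sqrt_rpow_div {x : ℝ} (hx : 0 < x) (a p d : ℝ) :
    HasDerivAt (fun y => a * y / √(y ^ p / d))
      ((1 - p / 2) * (a * x / √(x ^ p / d)) / x) x := by
  have hEq : (fun y => a * √d * y ^ (1 - p / 2)) =ᶠ[𝓝 x] fun y => a * y / √(y ^ p / d) :=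
    eventually_of_mem (Ioi_mem_nhds hx) fun y hy => (mul_div_sqrt_rpow_div hy a p d).symm
  have hD := ((Real.hasDerivAt_rpow_const (p := 1 - p / 2) (Or.inl hx.ne')).const_mul
    (a * √d)).congr_of_eventuallyEq hEq.symm
  refine hD.congr_deriv ?_
  rw [mul_div_sqrt_rpow_div hx, Real.rpow_sub_one hx.ne']
  ring

lemma deriv_comp_mul_rpow_div_add_le {γ c x S' : ℝ} {φ η S : ℝ → ℝ} (hx : 0 < x) (hγ : 1 < γ)
    (hη : HasDerivAt η (γ / 2 * η x / x) x) (hφ : DifferentiableAt ℝ φ (η x))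
    (hsub : η x * deriv φ (η x) ≤ φ (η x)) (hS : HasDerivAt S S' x) (hcS : c * S' ≤ 0) :
    deriv (fun y => φ (η y) * y ^ (1 - γ) / (γ - 1) + c * S y) x ≤
      (γ / (2 * (γ - 1)) - 1) * φ (η x) * x ^ (-γ) := by
  have hR : HasDerivAt (fun y => φ (η y) * y ^ (1 - γ) / (γ - 1) + c * S y)
      ((deriv φ (η x) * (γ / 2 * η x / x) * x ^ (1 - γ) +
        φ (η x) * ((1 - γ) * x ^ (1 - γ - 1))) / (γ - 1) + c * S') x :=
    (((hφ.hasDerivAt.comp x hη).mul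
    (Real.hasDerivAt_rpow_const (p := 1 - γ) (Or.inl hx.ne'))).div_const (γ - 1)).add
    (hS.const_mul c)
  rw [hR.deriv]
  have hpow : x ^ (1 - γ) = x * x ^ (-γ) := by
    rw [← Real.rpow_one_add' hx.le (by linarith)]
    ring_nf
  have hpow' : x ^ (1 - γ - 1) = x ^ (-γ) := by ring_nf
  have hγ1 : 0 < γ - 1 := by linarith
  have hchain : deriv φ (η x) * (γ / 2 * η x / x) * x ^ (1 - γ) =
      γ / 2 * (η x * deriv φ (η x)) * x ^ (-γ) := by
    rw [hpow]
    field_simp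
  rw [hpow', hchain]
  calc (γ / 2 * (η x * deriv φ (η x)) * x ^ (-γ) + φ (η x) * ((1 - γ) * x ^ (-γ))) / (γ - 1)
        + c * S'
      ≤ (γ / 2 * φ (η x) * x ^ (-γ) + φ (η x) * ((1 - γ) * x ^ (-γ))) / (γ - 1) :=
        add_le_of_le_of_nonpos (by gcongr) hcS
    _ = (γ / (2 * (γ - 1)) - 1) * φ (η x) * x ^ (-γ) := by
        field_simp
        ring

lemma div_two_mul_sub_one_sub_one_nonpos {γ : ℝ} (hγ : 2 ≤ γ) : γ / (2 * (γ - 1)) - 1 ≤ 0 := by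
  rw [sub_nonpos, div_le_one (by linarith)]
  linarith

theorem stmt_18_general (γ lam A B x₀ : ℝ) (φ : ℝ → ℝ)
    (hγ : 2 < γ) (hlam : 0 < lam) (hA : 0 ≤ A) (hB : 0 ≤ B) (hx₀ : 0 < x₀)
    (hφ0 : ∀ x ∈ Ici (0 : ℝ), 0 ≤ φ x)
    (hdiff : Differentiable ℝ φ)
    (hsub : ∀ x : ℝ, 0 ≤ x → x * deriv φ x ≤ φ x) :
    ∀ xt : ℝ, x₀ ≤ xt →
      HasDerivAt (fun x : ℝ => A * x / Real.sqrt (x ^ (2 - γ) / (γ - 2)))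
        ((γ / 2) * (A * xt / Real.sqrt (xt ^ (2 - γ) / (γ - 2))) / xt) xt ∧
      deriv (fun x : ℝ =>
          φ (A * x / Real.sqrt (x ^ (2 - γ) / (γ - 2))) * x ^ (1 - γ) / (γ - 1) +
            lam * B * Real.sqrt (x ^ (2 - γ) / (γ - 2))) xt ≤
        (γ / (2 * (γ - 1)) - 1) *
          φ (A * xt / Real.sqrt (xt ^ (2 - γ) / (γ - 2))) * xt ^ (-γ) ∧
      (γ / (2 * (γ - 1)) - 1) *
          φ (A * xt / Real.sqrt (xt ^ (2 - γ) / (γ - 2))) * xt ^ (-γ) ≤ 0 := by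
  intro xt hxt
  have hx : 0 < xt := hx₀.trans_le hxt
  have hη := hasDerivAt_mul_div_sqrt_rpow_div hx A (2 - γ) (γ - 2)
  rw [show 1 - (2 - γ) / 2 = γ / 2 by ring] at hη
  have hη0 : 0 ≤ A * xt / Real.sqrt (xt ^ (2 - γ) / (γ - 2)) := by positivity
  refine ⟨hη, ?_, ?_⟩
  · refine deriv_comp_mul_rpow_div_add_le hx (by linarith) hη (hdiff _) (hsub _ hη0)
      (hasDerivAt_sqrt_rpow_div hx _ _) (mul_nonpos_of_nonneg_of_nonpos (by positivity) ?_)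
    exact div_nonpos_of_nonpos_of_nonneg
      (mul_nonpos_of_nonpos_of_nonneg (by linarith) (by positivity)) (Real.sqrt_nonneg _)
  · exact mul_nonpos_of_nonpos_of_nonneg
      (mul_nonpos_of_nonpos_of_nonneg (div_two_mul_sub_one_sub_one_nonpos hγ.le) (hφ0 _ hη0))
      (Real.rpow_pos_of_pos hx _).le

theorem stmt_18 (γ lam A B x₀ : ℝ) (φ : ℝ → ℝ)
    (hγ : 2 < γ) (hlam : 0 < lam) (hA : 0 ≤ A) (hB : 0 ≤ B) (hx₀ : 0 < x₀)
    (hφ0 : ∀ x ∈ Ici (0 : ℝ), 0 ≤ φ x)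
    (hmono : MonotoneOn φ (Ici 0))
    (hdiff : Differentiable ℝ φ)
    (hconc : ConcaveOn ℝ (Ici 0) φ)
    (hsub : ∀ x : ℝ, 0 ≤ x → x * deriv φ x ≤ φ x) :
    ∀ xt : ℝ, x₀ ≤ xt →
      HasDerivAt (fun x : ℝ => A * x / Real.sqrt (x ^ (2 - γ) / (γ - 2)))
        ((γ / 2) * (A * xt / Real.sqrt (xt ^ (2 - γ) / (γ - 2))) / xt) xt ∧
      deriv (fun x : ℝ =>
          φ (A * x / Real.sqrt (x ^ (2 - γ) / (γ - 2))) * x ^ (1 - γ) / (γ - 1) +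
            lam * B * Real.sqrt (x ^ (2 - γ) / (γ - 2))) xt ≤
        (γ / (2 * (γ - 1)) - 1) *
          φ (A * xt / Real.sqrt (xt ^ (2 - γ) / (γ - 2))) * xt ^ (-γ) ∧
      (γ / (2 * (γ - 1)) - 1) *
          φ (A * xt / Real.sqrt (xt ^ (2 - γ) / (γ - 2))) * xt ^ (-γ) ≤ 0 :=
  stmt_18_general γ lam A B x₀ φ hγ hlam hA hB hx₀ hφ0 hdiff hsub
end
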